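/- In SSynch with non-rigid movements, two finite-communication robots running the 3-color algorithm below solve Rendezvous from every pair of initial positions in ℝ², every pair of initial light colors in {A,B,C}, every pair of unit distances, every δ > 0, every fair schedule, and every adversarial choice of stopping points. In particular, Rendezvous of two finite-communication robots in SSynch is solvable by an algorithm of class 𝓛 with only three colors, even starting from an arbitrary color configuration, without unit distance agreement, and with non-rigid movements. -/

import Mathlib

/-- Points in the plane. -/
abbrev Pt := EuclideanSpace ℝ (Fin 2)

/-- The three light colors. -/
inductive ColABC | A | B | C
deriving DecidableEq

/-- A configuration of two finite-communication robots: positions and light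
colors (robot `r` is `false`, robot `s` is `true`); each robot sees only the
other robot's light. -/
structure ConfigFC where
  pos : Bool → Pt
  col : Bool → ColABC

/-- The 3-color algorithm (class 𝓛): on seeing the other robot's color `c`
from own position `p`, the other robot being at `q`, set own light and compute
the destination: `A ↦ (B, midpoint)`, `B ↦ (C, stay)`, `C ↦ (A, q)`. -/
noncomputable def algo15 (p q : Pt) (c : ColABC) : ColABC × Pt :=
  match c with
  | .A => (.B, p + (1/2 : ℝ) • (q - p))
  | .B => (.C, p)
  | .C => (.A, q)

/-- One SSynch round with non-rigid movements with parameter `δ`: each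
activated robot `i` (those with `act i = true`) simultaneously observes the
other robot's position and light, sets its own light, and moves along the
straight segment toward its computed destination, stopping at an
adversarially chosen point that either is the destination or lies at distance
at least `δ` from its starting point; non-activated robots do nothing. -/
def StepFC (δ : ℝ) (act : Bool → Bool) (c c' : ConfigFC) : Prop :=
  ∀ i : Bool,
    (act i = true →
      c'.col i = (algo15 (c.pos i) (c.pos (!i)) (c.col (!i))).1 ∧
      c'.pos i ∈ segment ℝ (c.pos i) (algo15 (c.pos i) (c.pos (!i)) (c.col (!i))).2 ∧
      (c'.pos i = (algo15 (c.pos i) (c.pos (!i)) (c.col (!i))).2 ∨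
        δ ≤ ‖c'.pos i - c.pos i‖)) ∧
    (act i = false → c'.pos i = c.pos i ∧ c'.col i = c.col i)

/-- A legal fair SSynch schedule: at every round a nonempty set of robots is
activated, and each robot is activated infinitely often. -/
def FairSched (sched : ℕ → Bool → Bool) : Prop :=
  (∀ n, sched n false = true ∨ sched n true = true) ∧
  (∀ i n, ∃ m, n ≤ m ∧ sched m i = true)

/-- Rendezvous is solved: from some round on, the two robots occupy the same
point and never move again. -/
def SolvesFC (exec : ℕ → ConfigFC) : Prop :=
  ∃ N : ℕ, ∀ n, N ≤ n → ∀ i, (exec n).pos i = (exec N).pos false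

/-!
Write `d` for the distance between the robots. An activated robot covers a fraction of the
segment towards the other robot that is at most `1/2`, `0` or `1` according to the light it
sees, so `d` never increases. Call a round *balanced* when the two nominal fractions add up to
`1`. In a balanced round either both robots reach their destinations, and they meet, or one of
them is stopped after covering at least `δ`, and `d` drops by at least `δ`. Since `d` is
bounded below, the second alternative can only occur finitely often.

Balanced rounds occur infinitely often, whatever the positions: the lights evolve as a finite
automaton driven by the schedule, and every round that is not balanced either lowers a rank of
the pair of lights or leaves the lights unchanged while a particular robot sleeps; fairness
wakes that robot up.
-/

open Filter Topology

theorem Antitone.eventually_sub_lt_succ {f : ℕ → ℝ} (hf : Antitone f)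
    (hbdd : BddBelow (Set.range f)) {ε : ℝ} (hε : 0 < ε) :
    ∀ᶠ n in atTop, f n - ε < f (n + 1) := by
  have hlim := tendsto_atTop_ciInf hf hbdd
  have hdiff : Tendsto (fun n => f n - f (n + 1)) atTop (𝓝 0) := by
    simpa using hlim.sub (hlim.comp (tendsto_add_atTop_nat 1))
  filter_upwards [hdiff.eventually (gt_mem_nhds hε)] with n hn
  linarith

theorem frequently_of_rank_step {σ : Type*} (rank : σ → ℕ) (state : ℕ → σ)
    (E : ℕ → σ → Prop) (hE : ∀ s, ∃ᶠ n in atTop, E n s) (P : ℕ → Prop)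
    (hstep : ∀ n, P n ∨ rank (state (n + 1)) < rank (state n) ∨
      (state (n + 1) = state n ∧ ¬ E n (state n))) :
    ∃ᶠ n in atTop, P n := by
  rw [frequently_atTop]
  intro N
  induction hk : rank (state N) using Nat.strong_induction_on generalizing N with
  | _ k ih =>
  have hdescend : ∀ n, N ≤ n → rank (state n) < k → ∃ b ≥ N, P b := fun n hNn hn =>
    let ⟨b, hb, hPb⟩ := ih _ hn n rfl
    ⟨b, hNn.trans hb, hPb⟩
  obtain ⟨m, hNm, hEm⟩ := frequently_atTop.1 (hE (state N)) N
  have hwait : ∀ j, N ≤ j → j ≤ m → (∃ b ≥ N, P b) ∨ state j = state N := by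
    intro j hNj hjm
    induction j, hNj using Nat.le_induction with
    | base => exact Or.inr rfl
    | succ j hNj ihj =>
      obtain h | hj := ihj (by omega)
      · exact Or.inl h
      obtain hP | hlt | ⟨heq, -⟩ := hstep j
      · exact Or.inl ⟨j, hNj, hP⟩
      · exact Or.inl (hdescend (j + 1) (by omega) (by rwa [hj, hk] at hlt))
      · exact Or.inr (heq.trans hj)
  obtain h | hm := hwait m hNm le_rfl
  · exact h
  obtain hP | hlt | ⟨-, hnE⟩ := hstep m
  · exact ⟨m, hNm, hP⟩
  · exact hdescend (m + 1) (by omega) (by rwa [hm, hk] at hlt)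
  · exact absurd (hm ▸ hEm) hnE

theorem dist_eq_abs_mul_of_eq_add_smul {E : Type*} [NormedAddCommGroup E] [NormedSpace ℝ E]
    {p p' : Bool → E} {a : Bool → ℝ} (h : ∀ i, p' i = p i + a i • (p (!i) - p i)) :
    dist (p' false) (p' true) = |1 - a false - a true| * dist (p false) (p true) := by
  rw [dist_eq_norm, dist_eq_norm, h, h, ← Real.norm_eq_abs, ← norm_smul]
  congr 1
  simp only [Bool.not_false, Bool.not_true]
  module

namespace ColABC

def next : ColABC → ColABC
  | A => B
  | B => C
  | C => A

noncomputable def frac : ColABC → ℝ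
  | A => 1 / 2
  | B => 0
  | C => 1

lemma frac_nonneg (c : ColABC) : 0 ≤ c.frac := by
  cases c <;> norm_num [frac]

lemma frac_le_one (c : ColABC) : c.frac ≤ 1 := by
  cases c <;> norm_num [frac]

end ColABC

lemma algo15_eq (p q : Pt) (c : ColABC) : algo15 p q c = (c.next, p + c.frac • (q - p)) := by
  cases c <;> simp [algo15, ColABC.next, ColABC.frac]

section Lights

variable (act : Bool → Bool) (c : Bool → ColABC)

def lightStep : Bool → ColABC :=
  fun i => if act i then (c !i).next else c i

noncomputable def moveFrac (i : Bool) : ℝ :=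
  if act i then (c !i).frac else 0

def BalancedRound : Prop :=
  moveFrac act c false + moveFrac act c true = 1

-- The rank decreases along the unbalanced transitions
-- `(B, B) → (C, C) → (A, A) → (A, B) → (C, B)` and `(A, C) → (A, B)` and their mirror images;
-- `(A, B)` and `(B, C)` are left only when `r` wakes up, and symmetrically for `s`.
def lightRank : ℕ :=
  match c false, c true with
  | .B, .C | .C, .B => 1
  | .A, .B | .B, .A => 2
  | .A, .A | .A, .C | .C, .A => 3
  | .C, .C => 4
  | .B, .B => 5

def awaitedRobot : Bool :=
  match c false, c true with
  | .B, .A | .C, .B => true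
  | _, _ => false

lemma moveFrac_le_one (i : Bool) : moveFrac act c i ≤ 1 := by
  unfold moveFrac; split_ifs <;> simp [ColABC.frac_le_one]

lemma balancedRound_or_lightRank_lt_or_waiting :
    BalancedRound act c ∨ lightRank (lightStep act c) < lightRank c ∨
      (lightStep act c = c ∧ act (awaitedRobot c) = false) := by
  simp only [BalancedRound, moveFrac, lightStep, lightRank, awaitedRobot, funext_iff,
    Bool.forall_bool, Bool.not_false, Bool.not_true]
  cases c false <;> cases c true <;> cases act false <;> cases act true <;>
    norm_num [ColABC.next, ColABC.frac]

end Lights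

noncomputable def ConfigFC.gap (c : ConfigFC) : ℝ :=
  dist (c.pos false) (c.pos true)

lemma ConfigFC.gap_eq_norm (c : ConfigFC) (i : Bool) : c.gap = ‖c.pos (!i) - c.pos i‖ := by
  cases i <;> simp [ConfigFC.gap, dist_eq_norm, norm_sub_rev]

namespace StepFC

variable {δ : ℝ} {act : Bool → Bool} {c c' : ConfigFC}

lemma col_eq (h : StepFC δ act c c') : c'.col = lightStep act c.col := by
  funext i
  cases hi : act i
  · simp [lightStep, hi, ((h i).2 hi).2]
  · simp [lightStep, hi, ((h i).1 hi).1, algo15_eq]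

lemma exists_pos_eq (h : StepFC δ act c c') (i : Bool) :
    ∃ a, 0 ≤ a ∧ a ≤ moveFrac act c.col i ∧
      c'.pos i = c.pos i + a • (c.pos (!i) - c.pos i) ∧
      (a = moveFrac act c.col i ∨ δ ≤ a * c.gap ∨ c.gap = 0) := by
  cases hi : act i
  · have hfrac : moveFrac act c.col i = 0 := by simp [moveFrac, hi]
    exact ⟨0, le_rfl, hfrac.ge, by simp [((h i).2 hi).1], Or.inl hfrac.symm⟩
  obtain ⟨-, hseg, hdest⟩ := (h i).1 hi
  simp only [algo15_eq] at hseg hdest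
  have hfrac : moveFrac act c.col i = (c.col !i).frac := by simp [moveFrac, hi]
  rw [hfrac]
  set v := c.pos (!i) - c.pos i
  set μ := (c.col !i).frac
  have hμ : 0 ≤ μ := ColABC.frac_nonneg _
  rw [segment_eq_image'] at hseg
  obtain ⟨t, ⟨ht0, ht1⟩, hpos⟩ := hseg
  simp only [add_sub_cancel_left, smul_smul] at hpos
  refine ⟨t * μ, mul_nonneg ht0 hμ, mul_le_of_le_one_left hμ ht1, hpos.symm, ?_⟩
  rw [← hpos] at hdest
  obtain hdest | hdest := hdest
  · have hzero : (t * μ - μ) • v = 0 := by rw [sub_smul, add_left_cancel hdest, sub_self]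
    obtain h0 | h0 := smul_eq_zero.1 hzero
    · exact Or.inl (sub_eq_zero.1 h0)
    · exact Or.inr (Or.inr ((c.gap_eq_norm i).trans (norm_eq_zero.2 h0)))
  · rw [add_sub_cancel_left, norm_smul, Real.norm_of_nonneg (mul_nonneg ht0 hμ),
      ← c.gap_eq_norm i] at hdest
    exact Or.inr (Or.inl hdest)

lemma gap_le (h : StepFC δ act c c') : c'.gap ≤ c.gap := by
  choose a ha0 ha1 hpos _ using h.exists_pos_eq
  have ha1' := fun i => (ha1 i).trans (moveFrac_le_one act c.col i)
  rw [ConfigFC.gap, dist_eq_abs_mul_of_eq_add_smul hpos]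
  refine mul_le_of_le_one_left dist_nonneg (abs_le.2 ⟨?_, ?_⟩) <;>
    linarith [ha0 false, ha0 true, ha1' false, ha1' true]

lemma gap_eq_zero_or_le_sub (h : StepFC δ act c c') (hbal : BalancedRound act c.col) :
    c'.gap = 0 ∨ c'.gap ≤ c.gap - δ := by
  choose a ha0 ha1 hpos hcases using h.exists_pos_eq
  rw [ConfigFC.gap, dist_eq_abs_mul_of_eq_add_smul hpos, ← ConfigFC.gap]
  have hsum : a false + a true ≤ 1 := hbal ▸ add_le_add (ha1 false) (ha1 true)
  rw [abs_of_nonneg (by linarith)]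
  by_cases hfull : a false = moveFrac act c.col false ∧ a true = moveFrac act c.col true
  · left
    rw [sub_sub, hfull.1, hfull.2, hbal, sub_self, zero_mul]
  obtain hmove | h0 : (δ ≤ a false * c.gap ∨ δ ≤ a true * c.gap) ∨ c.gap = 0 := by
    rcases hcases false with h1 | h1 | h1 <;> rcases hcases true with h2 | h2 | h2 <;> tauto
  · right
    have hg : 0 ≤ c.gap := dist_nonneg
    have := mul_nonneg (ha0 false) hg
    have := mul_nonneg (ha0 true) hg
    rcases hmove with hm | hm <;> nlinarith
  · left
    rw [h0, mul_zero]

lemma pos_eq_of_gap_eq_zero (h : StepFC δ act c c') (h0 : c.gap = 0) : c'.pos = c.pos := by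
  funext i
  obtain ⟨a, -, -, hpos, -⟩ := h.exists_pos_eq i
  have hv : c.pos (!i) - c.pos i = 0 := norm_eq_zero.1 ((c.gap_eq_norm i).symm.trans h0)
  rw [hpos, hv, smul_zero, add_zero]

end StepFC

section Execution

variable {δ : ℝ} {exec : ℕ → ConfigFC} {sched : ℕ → Bool → Bool}

theorem frequently_balancedRound (hfair : FairSched sched)
    (hstep : ∀ n, StepFC δ (sched n) (exec n) (exec (n + 1))) :
    ∃ᶠ n in atTop, BalancedRound (sched n) (exec n).col :=
  frequently_of_rank_step lightRank (fun n => (exec n).col)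
    (fun n c => sched n (awaitedRobot c) = true)
    (fun c => frequently_atTop.2 (hfair.2 (awaitedRobot c))) _ fun n => by
      simpa only [(hstep n).col_eq, Bool.not_eq_true] using
        balancedRound_or_lightRank_lt_or_waiting (sched n) (exec n).col

theorem exec_pos_eq_of_gap_eq_zero (hstep : ∀ n, StepFC δ (sched n) (exec n) (exec (n + 1)))
    {n : ℕ} (h0 : (exec n).gap = 0) : ∀ m, n ≤ m → (exec m).pos = (exec n).pos := by
  intro m hm
  induction m, hm using Nat.le_induction with
  | base => rfl
  | succ m _ ih =>
    rw [(hstep m).pos_eq_of_gap_eq_zero (by rwa [ConfigFC.gap, ih]), ih]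

end Execution

/-- In SSynch with non-rigid movements, two finite-communication robots
running the 3-color algorithm solve Rendezvous from every pair of initial
positions, every pair of initial light colors, every `δ > 0`, every fair
schedule and every adversarial choice of stopping points: Rendezvous of two
`FComm` robots in SSynch is solvable by an algorithm of class 𝓛 with only
three colors, even starting from an arbitrary color configuration, without
unit distance agreement, and with non-rigid movements. -/
theorem rendezvous_fcomm_ssynch_3colors (δ : ℝ) (hδ : 0 < δ)
    (exec : ℕ → ConfigFC) (sched : ℕ → Bool → Bool) (hfair : FairSched sched)
    (hstep : ∀ n, StepFC δ (sched n) (exec n) (exec (n + 1))) :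
    SolvesFC exec := by
  have hanti : Antitone fun n => (exec n).gap :=
    antitone_nat_of_succ_le fun n => (hstep n).gap_le
  have hslow : ∀ᶠ n in atTop, (exec n).gap - δ < (exec (n + 1)).gap :=
    hanti.eventually_sub_lt_succ ⟨0, Set.forall_mem_range.2 fun _ => dist_nonneg⟩ hδ
  obtain ⟨n, hbal, hn⟩ := ((frequently_balancedRound hfair hstep).and_eventually hslow).exists
  have hmeet : (exec (n + 1)).gap = 0 :=
    ((hstep n).gap_eq_zero_or_le_sub hbal).resolve_right hn.not_ge
  refine ⟨n + 1, fun m hm i => ?_⟩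
  rw [exec_pos_eq_of_gap_eq_zero hstep hmeet m hm]
  cases i
  · rfl
  · exact (dist_eq_zero.1 hmeet).symm
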